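/- arXiv:2406.03307 — 5 statements merged into one kernel-verified Lean document; each statement's English description precedes it below -/
import Mathlib

section
/- Let H be a real Hilbert space and (L_k)_{k∈K} a finite family of real Hilbert spaces with linear maps J_k : H → L_k (jump operators). Let ℓ : H → ℝ be linear, ρ > 0, and g_k ∈ L_k for each k. Let V ⊆ H be a linear subspace and S = v₀ + V an affine subspace of H. Assume: (a) consistency: u ∈ H satisfies J_k u = 0 for all k ∈ K and ⟪w, u⟫_H − Σ_{k∈K} ⟪J_k w, g_k⟫_{L_k} = ℓ(w) for all w ∈ V; (b) penalized discrete problem: u^h ∈ S satisfies ⟪w, u^h⟫_H + ρ Σ_{k∈K} ⟪J_k w, J_k u^h⟫_{L_k} = ℓ(w) for all w ∈ V; (c) gap estimate: there are constants γ_k ≥ 0 with ‖J_k w‖_{L_k} ≤ γ_k ‖w‖_H for all w ∈ V; (d) trace bounds: there are constants c_k ≥ 0 with ‖J_k v‖_{L_k} ≤ c_k ‖v‖_H for all v ∈ H; (e) interpolation estimate: there exists v^h ∈ S with ‖u − v^h‖_H ≤ E. Then ‖u^h − u‖_H ≤ Σ_{k∈K} γ_k ‖g_k‖_{L_k} + (2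 + ρ Σ_{k∈K} γ_k c_k) · E. -/
/-!
Strang's argument for the penalized problem. The discrete error `w = uh - vh` lies in `V`, so both
weak equations may be tested with it; since `J k u = 0`, subtracting them gives
`‖w‖² + ρ ∑ ‖J k w‖² = ⟪w, u - vh⟫ + ρ ∑ ⟪J k w, J k (u - vh)⟫ - ∑ ⟪J k w, g k⟫`.
The gap estimate controls the consistency term `∑ ⟪J k w, g k⟫` by `(∑ γ k ‖g k‖) ‖w‖`, the gap and
trace estimates control the penalty term, and dividing by `‖w‖` yields
`‖w‖ ≤ ∑ γ k ‖g k‖ + (1 + ρ ∑ γ k c k) ‖u - vh‖`. The triangle inequality through `vh` adds one more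
`‖u - vh‖ ≤ E`.
-/

open RealInnerProductSpace

lemma norm_le_of_inner_self_le_mul_norm {H : Type*} [NormedAddCommGroup H] [InnerProductSpace ℝ H]
    {w : H} {X : ℝ} (hX : 0 ≤ X) (h : ⟪w, w⟫ ≤ X * ‖w‖) : ‖w‖ ≤ X := by
  rw [real_inner_self_eq_norm_mul_norm] at h
  rcases (norm_nonneg w).eq_or_lt with hw | hw
  · rwa [← hw]
  · exact le_of_mul_le_mul_right h hw

lemma abs_sum_inner_le_of_norm_le {K : Type*} [Fintype K] {L : K → Type*}
    [∀ k, NormedAddCommGroup (L k)] [∀ k, InnerProductSpace ℝ (L k)]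
    {a b : ∀ k, L k} {α β : K → ℝ} {s t : ℝ}
    (ha : ∀ k, ‖a k‖ ≤ α k * s) (hb : ∀ k, ‖b k‖ ≤ β k * t) :
    |∑ k, ⟪a k, b k⟫| ≤ (∑ k, α k * β k) * (s * t) := by
  rw [Finset.sum_mul]
  refine (Finset.abs_sum_le_sum_abs _ _).trans (Finset.sum_le_sum fun k _ => ?_)
  calc |⟪a k, b k⟫| ≤ ‖a k‖ * ‖b k‖ := abs_real_inner_le_norm _ _
    _ ≤ (α k * s) * (β k * t) :=
        mul_le_mul (ha k) (hb k) (norm_nonneg _) ((norm_nonneg _).trans (ha k))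
    _ = α k * β k * (s * t) := by ring

section PenalizedProblem

variable {H : Type*} [NormedAddCommGroup H] [InnerProductSpace ℝ H]
  {K : Type*} [Fintype K] {L : K → Type*} [∀ k, NormedAddCommGroup (L k)]
  [∀ k, InnerProductSpace ℝ (L k)]
  {J : ∀ k, H →ₗ[ℝ] L k} {ℓ : H →ₗ[ℝ] ℝ} {ρ : ℝ} {g : ∀ k, L k} {u uh vh w : H}

lemma penalized_error_equation (hu_jump : ∀ k, J k u = 0)
    (hu_weak : ⟪w, u⟫ - ∑ k, ⟪J k w, g k⟫ = ℓ w)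
    (huh_weak : ⟪w, uh⟫ + ρ * ∑ k, ⟪J k w, J k uh⟫ = ℓ w) :
    ⟪w, uh - vh⟫ + ρ * ∑ k, ⟪J k w, J k (uh - vh)⟫ =
      ⟪w, u - vh⟫ + ρ * ∑ k, ⟪J k w, J k (u - vh)⟫ - ∑ k, ⟪J k w, g k⟫ := by
  simp only [map_sub, inner_sub_right, hu_jump, zero_sub, inner_neg_right,
    Finset.sum_sub_distrib, Finset.sum_neg_distrib]
  linarith

lemma norm_sub_le_of_penalized (hρ : 0 ≤ ρ) {V : Submodule ℝ H} (γ c : K → ℝ)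
    (hγ : ∀ k, 0 ≤ γ k) (hc : ∀ k, 0 ≤ c k)
    (hgap : ∀ k, ∀ w ∈ V, ‖J k w‖ ≤ γ k * ‖w‖) (htrace : ∀ k, ∀ v : H, ‖J k v‖ ≤ c k * ‖v‖)
    (hu_jump : ∀ k, J k u = 0) (hu_weak : ∀ w ∈ V, ⟪w, u⟫ - ∑ k, ⟪J k w, g k⟫ = ℓ w)
    (huh_weak : ∀ w ∈ V, ⟪w, uh⟫ + ρ * ∑ k, ⟪J k w, J k uh⟫ = ℓ w) (hV : uh - vh ∈ V) :
    ‖uh - vh‖ ≤ ∑ k, γ k * ‖g k‖ + (1 + ρ * ∑ k, γ k * c k) * ‖u - vh‖ := by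
  set w := uh - vh
  have hJw : ∀ k, ‖J k w‖ ≤ γ k * ‖w‖ := fun k => hgap k w hV
  have hconsistency : |∑ k, ⟪J k w, g k⟫| ≤ (∑ k, γ k * ‖g k‖) * (‖w‖ * 1) :=
    abs_sum_inner_le_of_norm_le hJw fun k => (mul_one ‖g k‖).ge
  have hpenalty : |∑ k, ⟪J k w, J k (u - vh)⟫| ≤ (∑ k, γ k * c k) * (‖w‖ * ‖u - vh‖) :=
    abs_sum_inner_le_of_norm_le hJw fun k => htrace k _
  have hpenalty_nonneg : 0 ≤ ρ * ∑ k, ⟪J k w, J k w⟫ :=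
    mul_nonneg hρ (Finset.sum_nonneg fun k _ => real_inner_self_nonneg)
  have herror := penalized_error_equation (vh := vh) hu_jump (hu_weak w hV) (huh_weak w hV)
  have hA : 0 ≤ ∑ k, γ k * ‖g k‖ := Finset.sum_nonneg fun k _ => mul_nonneg (hγ k) (norm_nonneg _)
  have hB : 0 ≤ ∑ k, γ k * c k := Finset.sum_nonneg fun k _ => mul_nonneg (hγ k) (hc k)
  refine norm_le_of_inner_self_le_mul_norm (by positivity) ?_
  have hρpenalty : ρ * ∑ k, ⟪J k w, J k (u - vh)⟫ ≤ ρ * ((∑ k, γ k * c k) * (‖w‖ * ‖u - vh‖)) :=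
    mul_le_mul_of_nonneg_left ((le_abs_self _).trans hpenalty) hρ
  calc ⟪w, w⟫ ≤ ⟪w, u - vh⟫ + ρ * ∑ k, ⟪J k w, J k (u - vh)⟫ - ∑ k, ⟪J k w, g k⟫ := by
        linarith
    _ ≤ ‖w‖ * ‖u - vh‖ + ρ * ((∑ k, γ k * c k) * (‖w‖ * ‖u - vh‖))
          + (∑ k, γ k * ‖g k‖) * (‖w‖ * 1) := by
        linarith [real_inner_le_norm w (u - vh), neg_le_abs (∑ k, ⟪J k w, g k⟫)]
    _ = _ := by ring

end PenalizedProblem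

/-- Hilbert-space form of Theorem 1: error estimate for a penalized
multi-patch weak formulation. -/
theorem multi_patch_penalized_error_estimate
    {H : Type*} [NormedAddCommGroup H] [InnerProductSpace ℝ H]
    {K : Type*} [Fintype K]
    {L : K → Type*} [∀ k, NormedAddCommGroup (L k)]
    [∀ k, InnerProductSpace ℝ (L k)]
    (J : ∀ k, H →ₗ[ℝ] L k) (ℓ : H →ₗ[ℝ] ℝ)
    (ρ : ℝ) (hρ : 0 < ρ) (g : ∀ k, L k)
    (V : Submodule ℝ H) (v₀ : H) (S : Set H)
    (hS : S = {x : H | x - v₀ ∈ V})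
    -- (a) consistency
    (u : H) (hu_jump : ∀ k, J k u = 0)
    (hu_weak : ∀ w ∈ V, ⟪w, u⟫ - ∑ k, ⟪J k w, g k⟫ = ℓ w)
    -- (b) penalized discrete problem
    (uh : H) (huh_mem : uh ∈ S)
    (huh_weak : ∀ w ∈ V, ⟪w, uh⟫ + ρ * ∑ k, ⟪J k w, J k uh⟫ = ℓ w)
    -- (c) gap estimate
    (γ : K → ℝ) (hγ : ∀ k, 0 ≤ γ k)
    (hgap : ∀ k, ∀ w ∈ V, ‖J k w‖ ≤ γ k * ‖w‖)
    -- (d) trace bounds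
    (c : K → ℝ) (hc : ∀ k, 0 ≤ c k)
    (htrace : ∀ k, ∀ v : H, ‖J k v‖ ≤ c k * ‖v‖)
    -- (e) interpolation estimate
    (E : ℝ) (hinterp : ∃ vh ∈ S, ‖u - vh‖ ≤ E) :
    ‖uh - u‖ ≤ ∑ k, γ k * ‖g k‖ + (2 + ρ * ∑ k, γ k * c k) * E := by
  obtain ⟨vh, hvh, hvhE⟩ := hinterp
  subst hS
  have hV : uh - vh ∈ V := by simpa using V.sub_mem huh_mem hvh
  have hdiscrete := norm_sub_le_of_penalized hρ.le γ c hγ hc hgap htrace hu_jump hu_weak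
    huh_weak hV
  have hB : 0 ≤ ρ * ∑ k, γ k * c k :=
    mul_nonneg hρ.le (Finset.sum_nonneg fun k _ => mul_nonneg (hγ k) (hc k))
  calc ‖uh - u‖ ≤ ‖uh - vh‖ + ‖u - vh‖ := by
        simpa [norm_sub_rev vh u] using norm_sub_le_norm_sub_add_norm_sub uh vh u
    _ ≤ ∑ k, γ k * ‖g k‖ + (2 + ρ * ∑ k, γ k * c k) * ‖u - vh‖ := by linarith
    _ ≤ _ := by gcongr
end

section
/- Let Γ ⊆ ℝ^d be a set (the patch interface). Let 𝕀 be a finite index set of nodes with positions x : 𝕀 → ℝ^d and nodal values u : 𝕀 → ℝ. For each patch label α ∈ {1,2}, let N^α : 𝕀 → (ℝ^d → ℝ) be shape functions and W^α : 𝕀 → 𝕀 → (ℝ^d → ℝ) convolution patch functions, and define the patchwise interpolant u^{h,α}(x) = Σ_{I∈𝕀} N^α_I(x) · Σ_{K∈𝕀} W^α_{I,K}(x) · u_K. Assume: (H0) for every node I with x_I ∉ Γ and every x ∈ Γ, N^α_I(x) = 0 for α = 1, 2; (C1) for every node I with x_I ∈ Γ and every x ∈ Γ, N^1_I(x) = N^2_I(x);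 (C2) for all nodes I, K with x_I ∈ Γ and x_K ∈ Γ and every x ∈ Γ, W^1_{I,K}(x) = W^2_{I,K}(x); (C3) for all nodes I, K with x_K ∉ Γ and every x ∈ Γ, W^α_{I,K}(x) = 0 for α = 1, 2. Then u^{h,1}(x) = u^{h,2}(x) for all x ∈ Γ. -/
/-- Theorem 2 of the paper (G⁰ compatibility): under the nodal-interface
hypothesis (H0) and the three compatibility conditions (C1)–(C3), the two
patchwise C-IGA interpolants agree pointwise on the interface Γ. -/
theorem G0_compatibility
    {d : ℕ} (Γ : Set (EuclideanSpace ℝ (Fin d)))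
    {ι : Type*} [Fintype ι]
    (x : ι → EuclideanSpace ℝ (Fin d)) (u : ι → ℝ)
    (N : Fin 2 → ι → EuclideanSpace ℝ (Fin d) → ℝ)
    (W : Fin 2 → ι → ι → EuclideanSpace ℝ (Fin d) → ℝ)
    -- (H0) shape functions of nodes off the interface vanish on the interface
    (hH0 : ∀ α : Fin 2, ∀ I : ι, x I ∉ Γ → ∀ p ∈ Γ, N α I p = 0)
    -- (C1) FEM shape functions match at the interface
    (hC1 : ∀ I : ι, x I ∈ Γ → ∀ p ∈ Γ, N 0 I p = N 1 I p)
    -- (C2) convolution patch functions for shared nodes match at the interface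
    (hC2 : ∀ I K : ι, x I ∈ Γ → x K ∈ Γ → ∀ p ∈ Γ, W 0 I K p = W 1 I K p)
    -- (C3) convolution patch functions for internal nodes vanish at the interface
    (hC3 : ∀ α : Fin 2, ∀ I K : ι, x K ∉ Γ → ∀ p ∈ Γ, W α I K p = 0) :
    ∀ p ∈ Γ,
      ∑ I, N 0 I p * ∑ K, W 0 I K p * u K =
        ∑ I, N 1 I p * ∑ K, W 1 I K p * u K := by
  intro p hp
  refine Finset.sum_congr rfl fun I _ => ?_
  by_cases hI : x I ∈ Γ
  · rw [hC1 I hI p hp]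
    congr 1
    refine Finset.sum_congr rfl fun K _ => ?_
    by_cases hK : x K ∈ Γ
    · rw [hC2 I K hI hK p hp]
    · rw [hC3 0 I K hK p hp, hC3 1 I K hK p hp]
  · rw [hH0 0 I hI p hp, hH0 1 I hI p hp]; simp
end

section
/- Let Γ ⊆ ℝ^d be a set (the patch interface). Nodes are indexed by pairs (m, n) ∈ I_ξ × I_η with I_ξ, I_η finite, and j₀ ∈ I_η is the interface index. For each α ∈ {1, 2}, let ξ^α, η^α : ℝ^d → ℝ be the parametric coordinate maps of patch α, with parametric nodal values ξ^α_m (m ∈ I_ξ) and η^α_n (n ∈ I_η), and suppose η^α(x) = η^α_{j₀} for all x ∈ Γ. Let N^{ξ,α}_i, N^{η,α}_j : ℝ → ℝ be 1D FEM shape functions and W^{ξ,α}_{i,m}, W^{η,α}_{j,n} : ℝ → ℝ 1D convolution patch functions satisfying N^{η,α}_j(η^α_{j₀}) = δ_{j j₀} and W^{η,α}_{j,n}(η^α_{j₀}) = δ_{n j₀} for all j, n, and let ρ^α : ℝ² → ℝ be positive with ρ^α(ξ, η^α_{j₀}) = 1 for all ξ ∈ ℝ. Define the 2D shape functions N^α_{(i,j)}(x)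 = N^{ξ,α}_i(ξ^α(x)) · N^{η,α}_j(η^α(x)) and convolution patch functions W^α_{(i,j),(m,n)}(x) = (ρ^α(ξ^α_m, η^α_n)/ρ^α(ξ^α(x), η^α(x))) · W^{ξ,α}_{i,m}(ξ^α(x)) · W^{η,α}_{j,n}(η^α(x)). If the ξ-direction factors of the two patches match at the interface, i.e., for all x ∈ Γ and all i, m: N^{ξ,1}_i(ξ^1(x)) = N^{ξ,2}_i(ξ^2(x)) and W^{ξ,1}_{i,m}(ξ^1(x)) = W^{ξ,2}_{i,m}(ξ^2(x)), then for all x ∈ Γ: (C1) N^1_{(i,j₀)}(x) = N^2_{(i,j₀)}(x) for all i, and N^α_{(i,j)}(x) = 0 whenever j ≠ j₀; (C2) W^1_{(i,j₀),(m,j₀)}(x) = W^2_{(i,j₀),(m,j₀)}(x) for all i, m; (C3) W^α_{(i,j),(m,n)}(x) = 0 whenever n ≠ j₀. -/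
/-!
On the interface the η-coordinate is frozen at the nodal value `η_{j₀}`, where the η-factors
are Kronecker deltas and the weight `ρ` equals `1`. Each product-rule function therefore
collapses there to its ξ-factor when the η-index is `j₀` and to `0` otherwise, so (C1)–(C3)
reduce to the matching of the ξ-factors.
-/

section ProductRule

variable {X ι κ : Type*} [DecidableEq κ] (ξ η : X → ℝ) {j₀ : κ} {x : X}

theorem product_shape_eq_ite (Nξ : ι → ℝ → ℝ) (Nη : κ → ℝ → ℝ) {c : ℝ}
    (hNη : ∀ j, Nη j c = if j = j₀ then 1 else 0) (hx : η x = c) (i : ι) (j : κ) :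
    Nξ i (ξ x) * Nη j (η x) = if j = j₀ then Nξ i (ξ x) else 0 := by
  rw [hx, hNη, mul_boole]

theorem weighted_product_patch_eq_ite (ξnod : ι → ℝ) (ηnod : κ → ℝ) (ρ : ℝ → ℝ → ℝ)
    (Wξ : ι → ι → ℝ → ℝ) (Wη : κ → κ → ℝ → ℝ)
    (hWη : ∀ j n, Wη j n (ηnod j₀) = if n = j₀ then 1 else 0)
    (hρ : ∀ s, ρ s (ηnod j₀) = 1) (hx : η x = ηnod j₀) (i m : ι) (j n : κ) :
    ρ (ξnod m) (ηnod n) / ρ (ξ x) (η x) * Wξ i m (ξ x) * Wη j n (η x) =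
      if n = j₀ then Wξ i m (ξ x) else 0 := by
  rw [hx, hWη, mul_boole]
  split_ifs with hn
  · rw [hn, hρ, hρ, div_one, one_mul]
  · rfl

end ProductRule

theorem product_rule_G0_compatibility_general
    {d : ℕ} (Γ : Set (EuclideanSpace ℝ (Fin d)))
    {Iξ Iη : Type*} [DecidableEq Iη]
    (j₀ : Iη)
    -- parametric coordinate maps of the two patches
    (ξmap ηmap : Fin 2 → EuclideanSpace ℝ (Fin d) → ℝ)
    -- parametric nodal values
    (ξnod : Fin 2 → Iξ → ℝ) (ηnod : Fin 2 → Iη → ℝ)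
    -- every physical interface point has η-parametric coordinate η^α_{j₀}
    (hηΓ : ∀ α : Fin 2, ∀ x ∈ Γ, ηmap α x = ηnod α j₀)
    -- 1D FEM shape functions and 1D convolution patch functions
    (Nξ : Fin 2 → Iξ → ℝ → ℝ) (Nη : Fin 2 → Iη → ℝ → ℝ)
    (Wξ : Fin 2 → Iξ → Iξ → ℝ → ℝ) (Wη : Fin 2 → Iη → Iη → ℝ → ℝ)
    -- Kronecker delta property of the η-direction factors at the interface
    (hNη : ∀ α : Fin 2, ∀ j : Iη, Nη α j (ηnod α j₀) = if j = j₀ then 1 else 0)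
    (hWη : ∀ α : Fin 2, ∀ j n : Iη, Wη α j n (ηnod α j₀) = if n = j₀ then 1 else 0)
    -- positive weighting factor, normalized to 1 on the interface
    (ρ : Fin 2 → ℝ → ℝ → ℝ)
    (hρΓ : ∀ α : Fin 2, ∀ ξ : ℝ, ρ α ξ (ηnod α j₀) = 1)
    -- 2D shape functions and convolution patch functions built by the product rule
    (N : Fin 2 → Iξ × Iη → EuclideanSpace ℝ (Fin d) → ℝ)
    (W : Fin 2 → Iξ × Iη → Iξ × Iη → EuclideanSpace ℝ (Fin d) → ℝ)
    (hNdef : ∀ (α : Fin 2) (i : Iξ) (j : Iη) (x : EuclideanSpace ℝ (Fin d)),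
      N α (i, j) x = Nξ α i (ξmap α x) * Nη α j (ηmap α x))
    (hWdef : ∀ (α : Fin 2) (i m : Iξ) (j n : Iη) (x : EuclideanSpace ℝ (Fin d)),
      W α (i, j) (m, n) x =
        ρ α (ξnod α m) (ηnod α n) / ρ α (ξmap α x) (ηmap α x) *
          Wξ α i m (ξmap α x) * Wη α j n (ηmap α x))
    -- matching of the ξ-direction factors of the two patches at the interface
    (hmatchN : ∀ x ∈ Γ, ∀ i : Iξ, Nξ 0 i (ξmap 0 x) = Nξ 1 i (ξmap 1 x))
    (hmatchW : ∀ x ∈ Γ, ∀ i m : Iξ, Wξ 0 i m (ξmap 0 x) = Wξ 1 i m (ξmap 1 x)) :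
    ∀ x ∈ Γ,
      -- (C1)
      ((∀ i : Iξ, N 0 (i, j₀) x = N 1 (i, j₀) x) ∧
        (∀ (α : Fin 2) (i : Iξ) (j : Iη), j ≠ j₀ → N α (i, j) x = 0)) ∧
      -- (C2)
      (∀ i m : Iξ, W 0 (i, j₀) (m, j₀) x = W 1 (i, j₀) (m, j₀) x) ∧
      -- (C3)
      (∀ (α : Fin 2) (i m : Iξ) (j n : Iη), n ≠ j₀ → W α (i, j) (m, n) x = 0) := by
  intro x hx
  have hN : ∀ α i j, N α (i, j) x = if j = j₀ then Nξ α i (ξmap α x) else 0 :=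
    fun α i j => (hNdef α i j x).trans <|
      product_shape_eq_ite (ξmap α) (ηmap α) (Nξ α) (Nη α) (hNη α) (hηΓ α x hx) i j
  have hW : ∀ α i m j n, W α (i, j) (m, n) x = if n = j₀ then Wξ α i m (ξmap α x) else 0 :=
    fun α i m j n => (hWdef α i m j n x).trans <|
      weighted_product_patch_eq_ite (ξmap α) (ηmap α) (ξnod α) (ηnod α) (ρ α) (Wξ α) (Wη α)
        (hWη α) (hρΓ α) (hηΓ α x hx) i m j n
  refine ⟨⟨fun i => ?_, fun α i j hj => ?_⟩, fun i m => ?_, fun α i m j n hn => ?_⟩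
  · simp only [hN, if_pos, hmatchN x hx i]
  · rw [hN, if_neg hj]
  · simp only [hW, if_pos, hmatchW x hx i m]
  · rw [hW, if_neg hn]

/-- Theorem 3 of the paper: for C-IGA shape functions built by the product rule
over regular parametric meshes, matching of the 1D ξ-direction factors of the two
patches at the interface implies the three G⁰ compatibility conditions (C1)–(C3)
of Theorem 2. -/
theorem product_rule_G0_compatibility
    {d : ℕ} (Γ : Set (EuclideanSpace ℝ (Fin d)))
    {Iξ Iη : Type*} [Fintype Iξ] [Fintype Iη] [DecidableEq Iη]
    (j₀ : Iη)
    -- parametric coordinate maps of the two patches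
    (ξmap ηmap : Fin 2 → EuclideanSpace ℝ (Fin d) → ℝ)
    -- parametric nodal values
    (ξnod : Fin 2 → Iξ → ℝ) (ηnod : Fin 2 → Iη → ℝ)
    -- every physical interface point has η-parametric coordinate η^α_{j₀}
    (hηΓ : ∀ α : Fin 2, ∀ x ∈ Γ, ηmap α x = ηnod α j₀)
    -- 1D FEM shape functions and 1D convolution patch functions
    (Nξ : Fin 2 → Iξ → ℝ → ℝ) (Nη : Fin 2 → Iη → ℝ → ℝ)
    (Wξ : Fin 2 → Iξ → Iξ → ℝ → ℝ) (Wη : Fin 2 → Iη → Iη → ℝ → ℝ)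
    -- Kronecker delta property of the η-direction factors at the interface
    (hNη : ∀ α : Fin 2, ∀ j : Iη, Nη α j (ηnod α j₀) = if j = j₀ then 1 else 0)
    (hWη : ∀ α : Fin 2, ∀ j n : Iη, Wη α j n (ηnod α j₀) = if n = j₀ then 1 else 0)
    -- positive weighting factor, normalized to 1 on the interface
    (ρ : Fin 2 → ℝ → ℝ → ℝ)
    (hρpos : ∀ α : Fin 2, ∀ ξ η : ℝ, 0 < ρ α ξ η)
    (hρΓ : ∀ α : Fin 2, ∀ ξ : ℝ, ρ α ξ (ηnod α j₀) = 1)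
    -- 2D shape functions and convolution patch functions built by the product rule
    (N : Fin 2 → Iξ × Iη → EuclideanSpace ℝ (Fin d) → ℝ)
    (W : Fin 2 → Iξ × Iη → Iξ × Iη → EuclideanSpace ℝ (Fin d) → ℝ)
    (hNdef : ∀ (α : Fin 2) (i : Iξ) (j : Iη) (x : EuclideanSpace ℝ (Fin d)),
      N α (i, j) x = Nξ α i (ξmap α x) * Nη α j (ηmap α x))
    (hWdef : ∀ (α : Fin 2) (i m : Iξ) (j n : Iη) (x : EuclideanSpace ℝ (Fin d)),
      W α (i, j) (m, n) x =
        ρ α (ξnod α m) (ηnod α n) / ρ α (ξmap α x) (ηmap α x) *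
          Wξ α i m (ξmap α x) * Wη α j n (ηmap α x))
    -- matching of the ξ-direction factors of the two patches at the interface
    (hmatchN : ∀ x ∈ Γ, ∀ i : Iξ, Nξ 0 i (ξmap 0 x) = Nξ 1 i (ξmap 1 x))
    (hmatchW : ∀ x ∈ Γ, ∀ i m : Iξ, Wξ 0 i m (ξmap 0 x) = Wξ 1 i m (ξmap 1 x)) :
    ∀ x ∈ Γ,
      -- (C1)
      ((∀ i : Iξ, N 0 (i, j₀) x = N 1 (i, j₀) x) ∧
        (∀ (α : Fin 2) (i : Iξ) (j : Iη), j ≠ j₀ → N α (i, j) x = 0)) ∧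
      -- (C2)
      (∀ i m : Iξ, W 0 (i, j₀) (m, j₀) x = W 1 (i, j₀) (m, j₀) x) ∧
      -- (C3)
      (∀ (α : Fin 2) (i m : Iξ) (j n : Iη), n ≠ j₀ → W α (i, j) (m, n) x = 0) :=
  product_rule_G0_compatibility_general Γ j₀ ξmap ηmap ξnod ηnod hηΓ Nξ Nη Wξ Wη hNη hWη ρ hρΓ N W
    hNdef hWdef hmatchN hmatchW
end

section
/- Let I_ξ, I_η be finite index sets with parametric node coordinates ξ_m ∈ ℝ (m ∈ I_ξ) and η_n ∈ ℝ (n ∈ I_η). Let W : ℝ² → ℝ be a positive weighting function, η_Γ ∈ ℝ the interface parametric value, and set w̄(ξ) = W(ξ, η_Γ) and ρ(ξ, η) = W(ξ, η)/w̄(ξ). Fix an integer p ≥ 0. Suppose the 1D convolution patch functions W^ξ_m : ℝ → ℝ (m ∈ I_ξ) satisfy the Kronecker delta property W^ξ_m(ξ_r) = δ_{mr} for all m, r ∈ I_ξ and the weighted reproducing conditions Σ_{m∈I_ξ} W^ξ_m(ξ) · ξ_m^q / w̄(ξ_m) = ξ^q / w̄(ξ) for all ξ ∈ ℝ and q = 0,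 1, …, p; and suppose W^η_n : ℝ → ℝ (n ∈ I_η) satisfy W^η_n(η_t) = δ_{nt} for all n, t ∈ I_η and Σ_{n∈I_η} W^η_n(η) · η_n^q = η^q for all η ∈ ℝ and q = 0, 1, …, p. Define W_{(m,n)}(ξ, η) = (ρ(ξ_m, η_n)/ρ(ξ, η)) · W^ξ_m(ξ) · W^η_n(η). Then: (1) Kronecker delta: W_{(m,n)}(ξ_r, η_t) = δ_{mr} δ_{nt} for all m, r ∈ I_ξ and n, t ∈ I_η; (2) reproducing conditions: Σ_{(m,n)∈I_ξ×I_η} W_{(m,n)}(ξ, η) · ξ_m^{q₁} η_n^{q₂} / W(ξ_m, η_n) = ξ^{q₁} η^{q₂} / W(ξ, η) for all (ξ, η) ∈ ℝ² and all q₁, q₂ ∈ {0, 1, …, p}. -/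
/-!
Dividing `W_{(m,n)}(ξ, η)` by `W(ξ_m, η_n)` cancels the numerator of `ρ(ξ_m, η_n)`, so each
summand of the 2D reproducing sum splits as `w̄(ξ)/W(ξ, η)` times a term of the 1D `ξ`-sum times
a term of the 1D `η`-sum. The double sum is therefore that factor times the product of the two
1D sums, and the 1D reproducing conditions finish the computation. At the nodes, the product of
the 1D Kronecker deltas vanishes unless `(m, n) = (r, t)`, where the `ρ`-ratio is `1`.
-/

theorem div_mul_ite_mul_ite_eq {α β K : Type*} [DecidableEq α] [DecidableEq β]
    [DivisionRing K] (f : α → β → K) (hf : ∀ a b, f a b ≠ 0) (m r : α) (n t : β) :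
    f m n / f r t * (if m = r then 1 else 0) * (if n = t then 1 else 0) =
      (if m = r then (1 : K) else 0) * (if n = t then 1 else 0) := by
  by_cases hm : m = r <;> by_cases hn : n = t <;> simp [hm, hn, hf]

theorem Fintype.sum_prod_mul_mul {ι κ R : Type*} [Fintype ι] [Fintype κ] [CommSemiring R]
    (c : R) (f : ι → R) (g : κ → R) :
    ∑ k : ι × κ, c * f k.1 * g k.2 = c * (∑ i, f i) * ∑ j, g j := by
  rw [mul_assoc, Fintype.sum_mul_sum, Finset.mul_sum, Fintype.sum_prod_type]
  simp only [Finset.mul_sum, mul_assoc]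

section ProductRule

variable {W : ℝ → ℝ → ℝ} (hW : ∀ ξ η, W ξ η ≠ 0) (ηΓ : ℝ)
include hW

theorem nurbsRatio_ne_zero (ξ η : ℝ) : W ξ η / W ξ ηΓ ≠ 0 :=
  div_ne_zero (hW ξ η) (hW ξ ηΓ)

theorem productRule_mul_div_weight (ξm ηn ξ η u v s t : ℝ) :
    (W ξm ηn / W ξm ηΓ) / (W ξ η / W ξ ηΓ) * u * v * (s * t / W ξm ηn) =
      W ξ ηΓ / W ξ η * (u * (s / W ξm ηΓ)) * (v * t) := by
  field_simp [hW ξm ηn, hW ξm ηΓ, hW ξ η, hW ξ ηΓ]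

end ProductRule

/-- Theorem 4 of the paper (Appendix E): the 2D convolution patch functions built
by the product rule with the NURBS weighting factor `ρ(ξ, η) = W(ξ, η)/W(ξ, η_Γ)`
inherit the Kronecker delta property and the reproducing conditions for the
rational monomials `ξ^{q₁} η^{q₂} / W(ξ, η)` up to order `p` from the 1D factors. -/
theorem product_rule_kronecker_and_reproducing
    {Iξ Iη : Type*} [Fintype Iξ] [Fintype Iη] [DecidableEq Iξ] [DecidableEq Iη]
    (ξnod : Iξ → ℝ) (ηnod : Iη → ℝ)
    (W : ℝ → ℝ → ℝ) (hWpos : ∀ ξ η : ℝ, 0 < W ξ η)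
    (ηΓ : ℝ) (p : ℕ)
    (ρ : ℝ → ℝ → ℝ) (hρ : ∀ ξ η : ℝ, ρ ξ η = W ξ η / W ξ ηΓ)
    -- 1D convolution patch functions in the ξ-direction
    (Wξ : Iξ → ℝ → ℝ)
    (hWξδ : ∀ m r : Iξ, Wξ m (ξnod r) = if m = r then 1 else 0)
    (hWξrep : ∀ ξ : ℝ, ∀ q ≤ p,
      ∑ m, Wξ m ξ * (ξnod m ^ q / W (ξnod m) ηΓ) = ξ ^ q / W ξ ηΓ)
    -- 1D convolution patch functions in the η-direction
    (Wη : Iη → ℝ → ℝ)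
    (hWηδ : ∀ n t : Iη, Wη n (ηnod t) = if n = t then 1 else 0)
    (hWηrep : ∀ η : ℝ, ∀ q ≤ p, ∑ n, Wη n η * ηnod n ^ q = η ^ q)
    -- 2D convolution patch functions built by the product rule
    (W2 : Iξ × Iη → ℝ → ℝ → ℝ)
    (hW2 : ∀ (m : Iξ) (n : Iη) (ξ η : ℝ),
      W2 (m, n) ξ η = ρ (ξnod m) (ηnod n) / ρ ξ η * Wξ m ξ * Wη n η) :
    -- (1) Kronecker delta property
    (∀ (m r : Iξ) (n t : Iη),
      W2 (m, n) (ξnod r) (ηnod t) =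
        (if m = r then (1 : ℝ) else 0) * (if n = t then 1 else 0)) ∧
    -- (2) reproducing conditions
    (∀ ξ η : ℝ, ∀ q₁ ≤ p, ∀ q₂ ≤ p,
      ∑ k : Iξ × Iη,
        W2 k ξ η * (ξnod k.1 ^ q₁ * ηnod k.2 ^ q₂ / W (ξnod k.1) (ηnod k.2)) =
          ξ ^ q₁ * η ^ q₂ / W ξ η) := by
  have hW : ∀ ξ η, W ξ η ≠ 0 := fun ξ η => (hWpos ξ η).ne'
  refine ⟨fun m r n t => ?_, fun ξ η q₁ hq₁ q₂ hq₂ => ?_⟩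
  · rw [hW2, hWξδ, hWηδ]
    exact div_mul_ite_mul_ite_eq (fun a b => ρ (ξnod a) (ηnod b))
      (fun a b => hρ _ _ ▸ nurbsRatio_ne_zero hW ηΓ _ _) m r n t
  · have summand_split : ∀ k : Iξ × Iη,
        W2 k ξ η * (ξnod k.1 ^ q₁ * ηnod k.2 ^ q₂ / W (ξnod k.1) (ηnod k.2)) =
          W ξ ηΓ / W ξ η * (Wξ k.1 ξ * (ξnod k.1 ^ q₁ / W (ξnod k.1) ηΓ)) *
            (Wη k.2 η * ηnod k.2 ^ q₂) := fun k => by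
      rw [hW2, hρ, hρ, productRule_mul_div_weight hW]
    calc _ = W ξ ηΓ / W ξ η * (∑ m, Wξ m ξ * (ξnod m ^ q₁ / W (ξnod m) ηΓ)) *
            ∑ n, Wη n η * ηnod n ^ q₂ := by
          rw [Fintype.sum_congr _ _ summand_split, ← Fintype.sum_prod_mul_mul]
      _ = W ξ ηΓ / W ξ η * (ξ ^ q₁ / W ξ ηΓ) * η ^ q₂ := by rw [hWξrep ξ q₁ hq₁, hWηrep η q₂ hq₂]
      _ = ξ ^ q₁ * η ^ q₂ / W ξ η := by field_simp [hW ξ ηΓ]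
end

section
/- Let d ≥ 1 and let v : ℝ^d → ℝ be continuously differentiable. Then Σ_{i=1}^d ∫_{[0,1]^{d−1}} ( v(ι_i^0(y))² + v(ι_i^1(y))² ) dy ≤ (2d + √d) · ∫_{[0,1]^d} ( v(x)² + ‖∇v(x)‖² ) dx, where for c ∈ {0,1} the map ι_i^c : ℝ^{d−1} → ℝ^d inserts the value c as the i-th coordinate, and ∇v(x) denotes the (Fréchet) derivative of v at x identified with a vector in ℝ^d. -/
open MeasureTheory RealInnerProductSpace

/-- The closed unit cube `[0,1]^d` in `ℝ^d`. -/
def unitCube (d : ℕ) : Set (EuclideanSpace ℝ (Fin d)) :=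
  {x | ∀ j, x j ∈ Set.Icc (0 : ℝ) 1}

/-- The map `ι_i^c : ℝ^{d-1} → ℝ^d` inserting the value `c` as the `i`-th
coordinate. -/
noncomputable def insertCoord {n : ℕ} (i : Fin (n + 1)) (c : ℝ)
    (y : EuclideanSpace ℝ (Fin n)) : EuclideanSpace ℝ (Fin (n + 1)) :=
  WithLp.toLp 2 (i.insertNth c (fun j => y j))

/-!
Along each segment `t ↦ insertCoord i t y`, the fundamental theorem of calculus applied to
`w = v²` gives `w 0 + w 1 ≤ 2 w t + ∫₀¹ |w'|` for every `t ∈ [0,1]`; averaging over `t` and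
integrating over the face (Fubini) bounds the two faces orthogonal to `eᵢ` by
`∫ (2 v² + |2 v ∂ᵢv|)` over the cube. Summing over `i`, the bounds `∑ᵢ |∂ᵢv| ≤ √d ‖∇v‖`
(Cauchy–Schwarz) and `2 |v| ‖∇v‖ ≤ v² + ‖∇v‖²` produce the constant `2d + √d`.
-/

section
open intervalIntegral Set

variable {f f' : ℝ → ℝ}

theorem add_le_two_mul_add_integral_abs_deriv
    (hf : ∀ t ∈ Icc (0 : ℝ) 1, HasDerivAt f (f' t) t) (hf' : IntervalIntegrable f' volume 0 1)
    {t : ℝ} (ht : t ∈ Icc (0 : ℝ) 1) :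
    f 0 + f 1 ≤ 2 * f t + ∫ s in 0..1, |f' s| := by
  rw [← uIcc_of_le zero_le_one] at hf
  have hsub₁ : uIcc 0 t ⊆ uIcc 0 1 := uIcc_subset_uIcc_left (by rwa [uIcc_of_le zero_le_one])
  have hsub₂ : uIcc t 1 ⊆ uIcc 0 1 := uIcc_subset_uIcc_right (by rwa [uIcc_of_le zero_le_one])
  have hint₁ := hf'.mono_set hsub₁
  have hint₂ := hf'.mono_set hsub₂
  have hftc₁ : ∫ s in 0..t, f' s = f t - f 0 :=
    integral_eq_sub_of_hasDerivAt (fun s hs => hf s (hsub₁ hs)) hint₁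
  have hftc₂ : ∫ s in t..1, f' s = f 1 - f t :=
    integral_eq_sub_of_hasDerivAt (fun s hs => hf s (hsub₂ hs)) hint₂
  have habs₁ := abs_integral_le_integral_abs (f := f') (μ := volume) ht.1
  have habs₂ := abs_integral_le_integral_abs (f := f') (μ := volume) ht.2
  rw [← integral_add_adjacent_intervals hint₁.abs hint₂.abs]
  linarith [neg_abs_le (∫ s in 0..t, f' s), le_abs_self (∫ s in t..1, f' s)]

theorem add_le_setIntegral_two_mul_add_abs_deriv
    (hf : ∀ t ∈ Icc (0 : ℝ) 1, HasDerivAt f (f' t) t) (hf' : IntegrableOn f' (Icc 0 1)) :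
    f 0 + f 1 ≤ ∫ t in Icc 0 1, (2 * f t + |f' t|) := by
  have hf_int : IntegrableOn f (Icc 0 1) :=
    ContinuousOn.integrableOn_Icc fun t ht => (hf t ht).continuousAt.continuousWithinAt
  have hf'_int : IntervalIntegrable f' volume 0 1 :=
    (intervalIntegrable_iff_integrableOn_Icc_of_le zero_le_one).2 hf'
  have hvol : volume.real (Icc (0 : ℝ) 1) = 1 := by simp
  calc f 0 + f 1 = ∫ _ in Icc (0 : ℝ) 1, (f 0 + f 1) := by simp [hvol]
    _ ≤ ∫ t in Icc 0 1, (2 * f t + ∫ s in 0..1, |f' s|) :=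
      setIntegral_mono_on (by simp) ((hf_int.const_mul 2).add (by simp)) measurableSet_Icc
        fun t ht => add_le_two_mul_add_integral_abs_deriv hf hf'_int ht
    _ = ∫ t in Icc 0 1, (2 * f t + |f' t|) := by
      rw [integral_add (hf_int.const_mul 2) (by simp), integral_add (hf_int.const_mul 2) hf'.abs,
        integral_of_le zero_le_one, ← integral_Icc_eq_integral_Ioc]
      simp [hvol]
end

theorem ContDiff.continuous_gradient {E : Type*} [NormedAddCommGroup E] [InnerProductSpace ℝ E]
    [CompleteSpace E] {v : E → ℝ} (hv : ContDiff ℝ 1 v) : Continuous (gradient v) :=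
  (InnerProductSpace.toDual ℝ E).symm.continuous.comp (hv.continuous_fderiv one_ne_zero)

theorem sum_abs_le_sqrt_card_mul_norm {ι : Type*} [Fintype ι] (x : EuclideanSpace ℝ ι) :
    ∑ i, |x i| ≤ √(Fintype.card ι) * ‖x‖ := by
  simpa [EuclideanSpace.norm_eq] using
    Real.sum_mul_le_sqrt_mul_sqrt Finset.univ (fun _ => 1) (fun i => |x i|)

theorem sum_two_mul_sq_add_abs_le {ι : Type*} [Fintype ι] (a : ℝ) (x : EuclideanSpace ℝ ι) :
    ∑ i, (2 * a ^ 2 + |2 * a * x i|) ≤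
      (2 * Fintype.card ι + √(Fintype.card ι)) * (a ^ 2 + ‖x‖ ^ 2) := by
  have hamgm : 2 * |a| * ‖x‖ ≤ a ^ 2 + ‖x‖ ^ 2 := by
    simpa using two_mul_le_add_sq |a| ‖x‖
  calc _ = 2 * Fintype.card ι * a ^ 2 + 2 * |a| * ∑ i, |x i| := by
        simp only [Finset.sum_add_distrib, Finset.mul_sum, abs_mul, abs_two, Finset.sum_const,
          Finset.card_univ, nsmul_eq_mul]
        ring
    _ ≤ 2 * Fintype.card ι * a ^ 2 + 2 * |a| * (√(Fintype.card ι) * ‖x‖) := by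
      gcongr; exact sum_abs_le_sqrt_card_mul_norm x
    _ ≤ (2 * Fintype.card ι + √(Fintype.card ι)) * (a ^ 2 + ‖x‖ ^ 2) := by
      nlinarith [Real.sqrt_nonneg (Fintype.card ι), sq_nonneg ‖x‖]

theorem isCompact_unitCube (d : ℕ) : IsCompact (unitCube d) := by
  have : unitCube d = (PiLp.homeomorph 2 fun _ : Fin d => ℝ) ⁻¹' Set.Icc 0 1 := by
    ext x
    simp [unitCube, PiLp.homeomorph, Pi.le_def, forall_and]
  rw [this, Homeomorph.isCompact_preimage]
  exact isCompact_Icc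

theorem Continuous.integrableOn_unitCube {E : Type*} [NormedAddCommGroup E] {d : ℕ}
    {φ : EuclideanSpace ℝ (Fin d) → E} (hφ : Continuous φ) : IntegrableOn φ (unitCube d) :=
  hφ.continuousOn.integrableOn_compact (isCompact_unitCube d)

theorem measurableSet_unitCube (d : ℕ) : MeasurableSet (unitCube d) :=
  (isCompact_unitCube d).isClosed.measurableSet

section
variable {n : ℕ}

@[fun_prop]
theorem Continuous.insertCoord {X : Type*} [TopologicalSpace X] (i : Fin (n + 1)) {c : X → ℝ}
    {y : X → EuclideanSpace ℝ (Fin n)} (hc : Continuous c) (hy : Continuous y) :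
    Continuous fun x => _root_.insertCoord i (c x) (y x) := by
  unfold _root_.insertCoord
  fun_prop

theorem insertCoord_eq_add_smul_single (i : Fin (n + 1)) (t : ℝ)
    (y : EuclideanSpace ℝ (Fin n)) :
    insertCoord i t y = insertCoord i 0 y + t • EuclideanSpace.single i 1 := by
  ext j
  induction j using i.succAboveCases <;>
    simp [insertCoord, i.succAbove_ne]

theorem hasDerivAt_insertCoord (i : Fin (n + 1)) (t : ℝ) (y : EuclideanSpace ℝ (Fin n)) :
    HasDerivAt (fun s => insertCoord i s y) (EuclideanSpace.single i 1) t := by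
  rw [funext fun s => insertCoord_eq_add_smul_single i s y]
  simpa using ((hasDerivAt_id t).smul_const (EuclideanSpace.single i (1 : ℝ))).const_add
    (insertCoord i 0 y)

theorem DifferentiableAt.hasDerivAt_comp_insertCoord {v : EuclideanSpace ℝ (Fin (n + 1)) → ℝ}
    {i : Fin (n + 1)} {t : ℝ} {y : EuclideanSpace ℝ (Fin n)}
    (hv : DifferentiableAt ℝ v (insertCoord i t y)) :
    HasDerivAt (fun s => v (insertCoord i s y)) (gradient v (insertCoord i t y) i) t := by
  have := hv.hasFDerivAt.comp_hasDerivAt t (hasDerivAt_insertCoord i t y)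
  rwa [← inner_gradient_left, EuclideanSpace.inner_single_right, one_mul] at this

noncomputable def insertCoordEquiv (i : Fin (n + 1)) :
    ℝ × EuclideanSpace ℝ (Fin n) ≃ᵐ EuclideanSpace ℝ (Fin (n + 1)) :=
  ((MeasurableEquiv.refl ℝ).prodCongr (MeasurableEquiv.toLp 2 (Fin n → ℝ)).symm).trans <|
    (MeasurableEquiv.piFinSuccAbove (fun _ => ℝ) i).symm.trans (MeasurableEquiv.toLp 2 _)

theorem insertCoordEquiv_apply (i : Fin (n + 1)) (p : ℝ × EuclideanSpace ℝ (Fin n)) :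
    insertCoordEquiv i p = insertCoord i p.1 p.2 := rfl

theorem insertCoordEquiv_preimage_unitCube (i : Fin (n + 1)) :
    insertCoordEquiv i ⁻¹' unitCube (n + 1) = Set.Icc 0 1 ×ˢ unitCube n := by
  ext ⟨t, y⟩
  simp [insertCoordEquiv_apply, unitCube, insertCoord, i.forall_iff_succAbove]

theorem measurePreserving_insertCoordEquiv (i : Fin (n + 1)) :
    MeasurePreserving (insertCoordEquiv i) (volume.restrict (Set.Icc 0 1) |>.prod
      (volume.restrict (unitCube n))) (volume.restrict (unitCube (n + 1))) := by
  have hpi := measurePreserving_piFinSuccAbove (fun _ : Fin (n + 1) => (volume : Measure ℝ)) i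
  simp only [← volume_pi] at hpi
  have hvol : MeasurePreserving (insertCoordEquiv i) (volume.prod volume) volume :=
    (EuclideanSpace.volume_preserving_symm_measurableEquiv_toLp _).symm.comp hpi.symm |>.comp <|
      (MeasurePreserving.id volume).prod
        (EuclideanSpace.volume_preserving_symm_measurableEquiv_toLp _)
  rw [Measure.prod_restrict, ← insertCoordEquiv_preimage_unitCube i]
  exact hvol.restrict_preimage_emb (insertCoordEquiv i).measurableEmbedding _

theorem integrable_comp_insertCoord {φ : EuclideanSpace ℝ (Fin (n + 1)) → ℝ}
    (i : Fin (n + 1)) (hφ : IntegrableOn φ (unitCube (n + 1))) :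
    Integrable (fun p : ℝ × EuclideanSpace ℝ (Fin n) => φ (insertCoord i p.1 p.2))
      ((volume.restrict (Set.Icc 0 1)).prod (volume.restrict (unitCube n))) :=
  ((measurePreserving_insertCoordEquiv i).integrable_comp_emb
    (insertCoordEquiv i).measurableEmbedding).2 hφ

theorem setIntegral_unitCube_succ {φ : EuclideanSpace ℝ (Fin (n + 1)) → ℝ}
    (i : Fin (n + 1)) (hφ : IntegrableOn φ (unitCube (n + 1))) :
    ∫ x in unitCube (n + 1), φ x =
      ∫ y in unitCube n, ∫ t in Set.Icc 0 1, φ (insertCoord i t y) := by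
  rw [← (measurePreserving_insertCoordEquiv i).integral_comp
    (insertCoordEquiv i).measurableEmbedding]
  simp only [insertCoordEquiv_apply]
  rw [integral_prod _ (integrable_comp_insertCoord i hφ)]
  exact integral_integral_swap (integrable_comp_insertCoord i hφ)

theorem integrableOn_setIntegral_insertCoord {φ : EuclideanSpace ℝ (Fin (n + 1)) → ℝ}
    (i : Fin (n + 1)) (hφ : IntegrableOn φ (unitCube (n + 1))) :
    IntegrableOn (fun y => ∫ t in Set.Icc 0 1, φ (insertCoord i t y)) (unitCube n) :=
  (integrable_comp_insertCoord i hφ).integral_prod_right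
end

theorem setIntegral_face_sq_le {n : ℕ} {v : EuclideanSpace ℝ (Fin (n + 1)) → ℝ}
    (hv : ContDiff ℝ 1 v) (i : Fin (n + 1)) :
    ∫ y in unitCube n, (v (insertCoord i 0 y) ^ 2 + v (insertCoord i 1 y) ^ 2) ≤
      ∫ x in unitCube (n + 1), (2 * v x ^ 2 + |2 * v x * gradient v x i|) := by
  have hvc := hv.continuous
  have hgrad := hv.continuous_gradient
  have hφ :
      IntegrableOn (fun x => 2 * v x ^ 2 + |2 * v x * gradient v x i|) (unitCube (n + 1)) :=
    Continuous.integrableOn_unitCube (by fun_prop)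
  rw [setIntegral_unitCube_succ i hφ]
  refine setIntegral_mono_on ?_ (integrableOn_setIntegral_insertCoord i hφ)
    (measurableSet_unitCube n) fun y _ => ?_
  · exact Continuous.integrableOn_unitCube (by fun_prop)
  · refine add_le_setIntegral_two_mul_add_abs_deriv
      (f := fun t => v (insertCoord i t y) ^ 2)
      (f' := fun t => 2 * v (insertCoord i t y) * gradient v (insertCoord i t y) i)
      (fun t _ => ?_) (Continuous.integrableOn_Icc (by fun_prop))
    exact ((hv.differentiable one_ne_zero _).hasDerivAt_comp_insertCoord.fun_pow 2)
      |>.congr_deriv (by push_cast; ring)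

/-- Lemma 3 of the paper on the parametric domain (the unit cube): the trace
inequality `∫_{∂[0,1]^d} v² dS ≤ (2d + √d) ∫_{[0,1]^d} (v² + ‖∇v‖²) dx`, the
boundary integral being written as the sum over the `2d` faces of the cube. -/
theorem unit_cube_trace_inequality
    {n : ℕ} (v : EuclideanSpace ℝ (Fin (n + 1)) → ℝ) (hv : ContDiff ℝ 1 v) :
    ∑ i : Fin (n + 1), ∫ y in unitCube n,
        (v (insertCoord i 0 y) ^ 2 + v (insertCoord i 1 y) ^ 2) ≤
      (2 * (n + 1 : ℝ) + Real.sqrt (n + 1)) *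
        ∫ x in unitCube (n + 1), (v x ^ 2 + ‖gradient v x‖ ^ 2) := by
  have hvc := hv.continuous
  have hgrad := hv.continuous_gradient
  have hφ (i : Fin (n + 1)) :
      IntegrableOn (fun x => 2 * v x ^ 2 + |2 * v x * gradient v x i|) (unitCube (n + 1)) :=
    Continuous.integrableOn_unitCube (by fun_prop)
  have hψ : IntegrableOn (fun x => v x ^ 2 + ‖gradient v x‖ ^ 2) (unitCube (n + 1)) :=
    Continuous.integrableOn_unitCube (by fun_prop)
  calc _ ≤ ∑ i : Fin (n + 1),
        ∫ x in unitCube (n + 1), (2 * v x ^ 2 + |2 * v x * gradient v x i|) :=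
      Finset.sum_le_sum fun i _ => setIntegral_face_sq_le hv i
    _ = ∫ x in unitCube (n + 1),
        ∑ i : Fin (n + 1), (2 * v x ^ 2 + |2 * v x * gradient v x i|) :=
      (integral_finsetSum _ fun i _ => hφ i).symm
    _ ≤ ∫ x in unitCube (n + 1),
        (2 * (n + 1 : ℝ) + Real.sqrt (n + 1)) * (v x ^ 2 + ‖gradient v x‖ ^ 2) :=
      setIntegral_mono_on (integrable_finsetSum _ fun i _ => hφ i) (hψ.const_mul _)
        (measurableSet_unitCube _) fun x _ => by
          simpa using sum_two_mul_sq_add_abs_le (v x) (gradient v x)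
    _ = _ := integral_const_mul _ _
end
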